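/- Let (F,W) be a mixed Hodge structure on V. Then there exists a unique bigrading V = ⊕_{p,q∈ℤ} I^{p,q} by complex subspaces such that: (a) F^p = ⊕_{r≥p, s} I^{r,s} for all p; (b) W_k = ⊕_{r+s≤k} I^{r,s} for all k; (c) σ(I^{p,q}) ⊆ I^{q,p} + ⊕_{r<q, s<p} I^{r,s} for all p,q. -/

import Mathlib

/-!
The bigrading is given by Deligne's explicit formula for `I^{p,q}` (`deligneI`). On `Gr^W_k`
the filtrations `F` and `F̄ = σ(F)` are `k`-opposed, so `Gr^W_k = ⊕_p F^p ∩ F̄^{k-p}`, and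
`I^{p,k-p}` is a lift of the `(p, k-p)` piece: it meets `W_{k-1}` trivially because the
opposedness on the lower graded pieces lets one peel off one weight at a time. Hence the
`I^{p,q}` are independent and span `F^p ∩ W_k`. Condition (c) follows by induction on the
weight, since spans of subfamilies of an independent family intersect like their index sets.
For uniqueness, any bigrading with (a)-(c) satisfies `J^{p,q} ⊆ I^{p,q}` by the formula, and
an independent family is the only spanning family below it.
-/

/-- A finite increasing filtration of `V` indexed by `ℤ`. -/
def FinIncrFil {V : Type*} [AddCommGroup V] [Module ℂ V] (W : ℤ → Submodule ℂ V) : Prop :=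
  Monotone W ∧ (∃ a : ℤ, W a = ⊥) ∧ (∃ b : ℤ, W b = ⊤)

/-- A finite decreasing filtration of `V` indexed by `ℤ`. -/
def FinDecrFil {V : Type*} [AddCommGroup V] [Module ℂ V] (F : ℤ → Submodule ℂ V) : Prop :=
  Antitone F ∧ (∃ a : ℤ, F a = ⊤) ∧ (∃ b : ℤ, F b = ⊥)

/-- `σ` is a conjugation: a conjugate-linear involution of the complex vector space `V`
(realizing `V` as the complexification of its fixed set `V_ℝ`). -/
def IsConjugation {V : Type*} [AddCommGroup V] [Module ℂ V] (σ : V →ₗ[ℝ] V) : Prop :=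
  (∀ v, σ (σ v) = v) ∧ ∀ (c : ℂ) (v : V), σ (c • v) = (starRingEnd ℂ) c • σ v

/-- `(F, W)` is a mixed Hodge structure on `V` with respect to the conjugation `σ`:
`W` is a finite increasing σ-stable filtration, `F` a finite decreasing filtration,
and for every `k`, `Gr^W_k = F^p Gr^W_k ⊕ σ(F^{k-p+1} Gr^W_k)` for all `p`
(expressed elementwise on representatives). -/
def IsMHS {V : Type*} [AddCommGroup V] [Module ℂ V] (σ : V →ₗ[ℝ] V)
    (F W : ℤ → Submodule ℂ V) : Prop :=
  FinIncrFil W ∧ (∀ k : ℤ, ∀ v ∈ W k, σ v ∈ W k) ∧ FinDecrFil F ∧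
    ∀ k p : ℤ,
      (∀ v ∈ W k, ∃ a ∈ F p ⊓ W k, ∃ b ∈ F (k - p + 1) ⊓ W k, v - a - σ b ∈ W (k - 1)) ∧
      (∀ a ∈ F p ⊓ W k, ∀ b ∈ F (k - p + 1) ⊓ W k, a - σ b ∈ W (k - 1) → a ∈ W (k - 1))

/-- A grading of an increasing filtration `W` of a complex vector space: a semisimple
endomorphism with integer eigenvalues with `W i = E_i(Y) ⊕ W (i-1)` for all `i`. -/
def IsGrading {V : Type*} [AddCommGroup V] [Module ℂ V] (W : ℤ → Submodule ℂ V)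
    (Y : Module.End ℂ V) : Prop :=
  (⨆ i : ℤ, Y.eigenspace (i : ℂ)) = ⊤ ∧
    ∀ i : ℤ, W i = Y.eigenspace (i : ℂ) ⊔ W (i - 1) ∧
      Disjoint (Y.eigenspace (i : ℂ)) (W (i - 1))

/-- An endomorphism `X` of `V` is real: `σ X σ = X`. -/
def IsRealEnd {V : Type*} [AddCommGroup V] [Module ℂ V] (σ : V →ₗ[ℝ] V)
    (X : Module.End ℂ V) : Prop :=
  ∀ v, σ (X (σ v)) = X v

/-- `I` is a Deligne bigrading of the mixed Hodge structure `(F, W)`: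
`V = ⊕_{p,q} I^{p,q}`, with (a) `F^p = ⊕_{r ≥ p, s} I^{r,s}`,
(b) `W_k = ⊕_{r+s ≤ k} I^{r,s}`, and
(c) `σ(I^{p,q}) ⊆ I^{q,p} + ⊕_{r<q, s<p} I^{r,s}`. -/
def IsDeligneBigrading {V : Type*} [AddCommGroup V] [Module ℂ V] (σ : V →ₗ[ℝ] V)
    (F W : ℤ → Submodule ℂ V) (I : ℤ → ℤ → Submodule ℂ V) : Prop :=
  DirectSum.IsInternal (fun pq : ℤ × ℤ => I pq.1 pq.2) ∧
  (∀ p : ℤ, F p = ⨆ (r : ℤ) (_ : p ≤ r) (s : ℤ), I r s) ∧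
  (∀ k : ℤ, W k = ⨆ (r : ℤ) (s : ℤ) (_ : r + s ≤ k), I r s) ∧
  (∀ p q : ℤ, ∀ v ∈ I p q,
    σ v ∈ I q p ⊔ ⨆ (r : ℤ) (_ : r < q) (s : ℤ) (_ : s < p), I r s)

/-- The endomorphism `Y` acts as multiplication by `p + q` on each `I^{p,q}`
(this characterizes the Deligne grading of a bigraded mixed Hodge structure). -/
def ActsAsDeligneGrading {V : Type*} [AddCommGroup V] [Module ℂ V]
    (I : ℤ → ℤ → Submodule ℂ V) (Y : Module.End ℂ V) : Prop :=
  ∀ p q : ℤ, ∀ v ∈ I p q, Y v = ((p + q : ℤ) : ℂ) • v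

section SupIndep

variable {α ι : Type*} [CompleteLattice α] [IsModularLattice α] [IsCompactlyGenerated α]
  {f : ι → α}

theorem iSupIndep_of_disjoint_biSup_lt {κ : Type*} [LinearOrder κ] {key : ι → κ}
    (hkey : Function.Injective key)
    (h : ∀ i, Disjoint (f i) (⨆ (j) (_ : key j < key i), f j)) : iSupIndep f := by
  classical
  refine iSupIndep_iff_supIndep.2 fun s => ?_
  induction s using Finset.induction_on_max_value key with
  | empty => exact Finset.supIndep_empty f
  | insert i s hi hle ih =>
    refine ih.insert ((h i).mono_right (Finset.sup_le fun j hj => ?_))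
    exact le_biSup f ((hle j hj).lt_of_ne (hkey.ne (ne_of_mem_of_not_mem hj hi)))

theorem iSupIndep.biSup_inf_biSup (hf : iSupIndep f) (s t : Set ι) :
    (⨆ i ∈ s, f i) ⊓ (⨆ i ∈ t, f i) = ⨆ i ∈ s ∩ t, f i := by
  have hle : ⨆ i ∈ s ∩ t, f i ≤ ⨆ i ∈ s, f i := biSup_mono fun _ => And.left
  have hdisj : Disjoint (⨆ i ∈ s, f i) (⨆ i ∈ t \ s, f i) :=
    hf.disjoint_biSup_biSup Set.disjoint_sdiff_right
  calc (⨆ i ∈ s, f i) ⊓ (⨆ i ∈ t, f i)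
      = ((⨆ i ∈ s ∩ t, f i) ⊔ ⨆ i ∈ t \ s, f i) ⊓ ⨆ i ∈ s, f i := by
        rw [← iSup_union, Set.inter_comm, Set.inter_union_sdiff, inf_comm]
    _ = ⨆ i ∈ s ∩ t, f i := by
        rw [sup_inf_assoc_of_le _ hle, inf_comm, hdisj.eq_bot, sup_bot_eq]

end SupIndep

theorem Int.induction_of_le_of_succ {P : ℤ → Prop} (a : ℤ) (hle : ∀ k ≤ a, P k)
    (hsucc : ∀ k, P k → P (k + 1)) (k : ℤ) : P k :=
  Int.inductionOn' k a (hle a le_rfl) (fun k _ => hsucc k) fun k hk _ => hle (k - 1) (by omega)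

theorem Int.induction_of_ge_of_pred {P : ℤ → Prop} (b : ℤ) (hge : ∀ k ≥ b, P k)
    (hpred : ∀ k, P (k + 1) → P k) (k : ℤ) : P k :=
  Int.inductionOn' k b (hge b le_rfl) (fun k hk _ => hge (k + 1) (by omega)) fun k _ h =>
    hpred (k - 1) (by simpa using h)

namespace IsConjugation

variable {V : Type*} [AddCommGroup V] [Module ℂ V] {σ : V →ₗ[ℝ] V} (hσ : IsConjugation σ)

def toSemilinearMap : V →ₛₗ[starRingEnd ℂ] V where
  toFun := σ
  map_add' := σ.map_add
  map_smul' := hσ.2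

def conj (M : Submodule ℂ V) : Submodule ℂ V := M.map hσ.toSemilinearMap

variable {hσ}

theorem mem_conj {M : Submodule ℂ V} {x : V} : x ∈ hσ.conj M ↔ σ x ∈ M := by
  refine ⟨?_, fun hx => ⟨σ x, hx, hσ.1 x⟩⟩
  rintro ⟨y, hy, rfl⟩
  simpa [toSemilinearMap, hσ.1 y] using hy

theorem conj_conj (M : Submodule ℂ V) : hσ.conj (hσ.conj M) = M := by
  ext x
  rw [mem_conj, mem_conj, hσ.1]

theorem conj_mono {M N : Submodule ℂ V} (h : M ≤ N) : hσ.conj M ≤ hσ.conj N :=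
  Submodule.map_mono h

theorem conj_le_iff {M N : Submodule ℂ V} : hσ.conj M ≤ N ↔ M ≤ hσ.conj N :=
  ⟨fun h => conj_conj M ▸ conj_mono h, fun h => conj_conj N ▸ conj_mono h⟩

theorem conj_sup (M N : Submodule ℂ V) : hσ.conj (M ⊔ N) = hσ.conj M ⊔ hσ.conj N :=
  Submodule.map_sup _ _ _

theorem conj_inf (M N : Submodule ℂ V) : hσ.conj (M ⊓ N) = hσ.conj M ⊓ hσ.conj N :=
  Submodule.map_inf _ (Function.LeftInverse.injective hσ.1)

theorem conj_iSup {ι : Sort*} (M : ι → Submodule ℂ V) :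
    hσ.conj (⨆ i, M i) = ⨆ i, hσ.conj (M i) :=
  Submodule.map_iSup _ _

end IsConjugation

section Deligne

open IsConjugation

variable {V : Type*} [AddCommGroup V] [Module ℂ V] {σ : V →ₗ[ℝ] V} (hσ : IsConjugation σ)
  (F W : ℤ → Submodule ℂ V)

/- `grF k p` and `grFbar k q` are the preimages in `W k` of `F^p Gr^W_k` and `σ(F^q) Gr^W_k`. -/
def grF (k p : ℤ) : Submodule ℂ V := F p ⊓ W k ⊔ W (k - 1)

def grFbar (k q : ℤ) : Submodule ℂ V := hσ.conj (F q ⊓ W k) ⊔ W (k - 1)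

def deligneR (q k : ℤ) : Submodule ℂ V :=
  F q ⊓ W k ⊔ ⨆ (j : ℤ) (_ : 0 < j), F (q - j) ⊓ W (k - j - 1)

/-- Deligne's formula
`I^{p,q} = F^p ∩ W_{p+q} ∩ (F̄^q ∩ W_{p+q} + ∑_{j ≥ 1} F̄^{q-j} ∩ W_{p+q-j-1})`, `F̄ = σ(F)`. -/
def deligneI (p q : ℤ) : Submodule ℂ V :=
  F p ⊓ W (p + q) ⊓ hσ.conj (deligneR F W q (p + q))

def deligneSpan (S : Set (ℤ × ℤ)) : Submodule ℂ V := ⨆ i ∈ S, deligneI hσ F W i.1 i.2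

variable {F W} {S T : Set (ℤ × ℤ)} {p q k m : ℤ}

theorem deligneI_le_F : deligneI hσ F W p q ≤ F p := inf_le_left.trans inf_le_left

theorem deligneI_le_deligneSpan (hi : (p, q) ∈ S) :
    deligneI hσ F W p q ≤ deligneSpan hσ F W S :=
  le_biSup (fun i : ℤ × ℤ => deligneI hσ F W i.1 i.2) hi

theorem deligneSpan_mono (hST : S ⊆ T) : deligneSpan hσ F W S ≤ deligneSpan hσ F W T :=
  biSup_mono hST

theorem deligneSpan_insert (i : ℤ × ℤ) :
    deligneSpan hσ F W (insert i S) = deligneI hσ F W i.1 i.2 ⊔ deligneSpan hσ F W S :=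
  iSup_insert

theorem conj_deligneSpan_le {M : Submodule ℂ V}
    (hS : ∀ i ∈ S, hσ.conj (deligneI hσ F W i.1 i.2) ≤ M) :
    hσ.conj (deligneSpan hσ F W S) ≤ M := by
  rw [deligneSpan, conj_iSup]
  exact iSup_le fun i => by rw [conj_iSup]; exact iSup_le (hS i)

namespace IsMHS

theorem monotone (h : IsMHS σ F W) : Monotone W := h.1.1

theorem antitone (h : IsMHS σ F W) : Antitone F := h.2.2.1.1

theorem conj_W (h : IsMHS σ F W) (k : ℤ) : hσ.conj (W k) = W k := by
  ext x
  rw [mem_conj]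
  exact ⟨fun hx => hσ.1 x ▸ h.2.1 k _ hx, h.2.1 k x⟩

theorem conj_inf_W (h : IsMHS σ F W) (M : Submodule ℂ V) (k : ℤ) :
    hσ.conj M ⊓ W k = hσ.conj (M ⊓ W k) := by
  rw [conj_inf, h.conj_W]

theorem W_le_grF_sup_grFbar (h : IsMHS σ F W) (k p : ℤ) :
    W k ≤ grF F W k p ⊔ grFbar hσ F W k (k - p + 1) := by
  intro v hv
  obtain ⟨a, ha, b, hb, hw⟩ := ((h.2.2.2 k p).1 v hv)
  have hv : v = (a + (v - a - σ b)) + (σ b + 0) := by abel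
  rw [hv]
  exact Submodule.add_mem_sup (Submodule.add_mem_sup ha hw)
    (Submodule.add_mem_sup ((mem_conj (hσ := hσ)).2 (by rwa [hσ.1])) (zero_mem _))

theorem grF_inf_grFbar_le (h : IsMHS σ F W) (k p : ℤ) :
    grF F W k p ⊓ grFbar hσ F W k (k - p + 1) ≤ W (k - 1) := by
  rintro x ⟨hx₁, hx₂⟩
  obtain ⟨a, ha, w₁, hw₁, rfl⟩ := Submodule.mem_sup.1 hx₁
  obtain ⟨c, hc, w₂, hw₂, hcw⟩ := Submodule.mem_sup.1 hx₂
  rw [mem_conj] at hc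
  have hac : a - σ (σ c) ∈ W (k - 1) := by
    rw [hσ.1, show a - c = w₂ - w₁ by rw [sub_eq_sub_iff_add_eq_add, ← hcw, add_comm]]
    exact sub_mem hw₂ hw₁
  exact add_mem ((h.2.2.2 k p).2 a ha (σ c) hc hac) hw₁

theorem grF_le_W (h : IsMHS σ F W) : grF F W k p ≤ W k :=
  sup_le inf_le_right (h.monotone (by omega))

theorem grF_eq_grF_succ_sup (h : IsMHS σ F W) :
    grF F W k p = grF F W k (p + 1) ⊔ grF F W k p ⊓ grFbar hσ F W k (k - p) := by
  have hsucc : grF F W k (p + 1) ≤ grF F W k p :=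
    sup_le_sup_right (inf_le_inf_right _ (h.antitone (by omega))) _
  have hW := h.W_le_grF_sup_grFbar hσ k (p + 1)
  rw [show k - (p + 1) + 1 = k - p by ring] at hW
  calc grF F W k p = (grF F W k (p + 1) ⊔ grFbar hσ F W k (k - p)) ⊓ grF F W k p :=
        (inf_eq_right.2 (h.grF_le_W.trans hW)).symm
    _ = _ := by rw [sup_inf_assoc_of_le _ hsucc, inf_comm]

theorem deligneI_le_W (h : IsMHS σ F W) (hk : p + q ≤ k) : deligneI hσ F W p q ≤ W k :=
  inf_le_left.trans (inf_le_right.trans (h.monotone hk))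

theorem deligneR_le (h : IsMHS σ F W) : deligneR F W q k ≤ F q ⊓ W k ⊔ W (k - 1) :=
  sup_le_sup_left (iSup₂_le fun _ _ => inf_le_right.trans (h.monotone (by omega))) _

theorem deligneI_le_grF_inf_grFbar (h : IsMHS σ F W) :
    deligneI hσ F W p q ≤ grF F W (p + q) p ⊓ grFbar hσ F W (p + q) q := by
  refine le_inf (inf_le_left.trans le_sup_left) (inf_le_right.trans ?_)
  rw [grFbar, ← h.conj_W hσ (p + q - 1), ← conj_sup]
  exact conj_mono h.deligneR_le

theorem F_inf_W_le_deligneR (h : IsMHS σ F W) (hm : m < p + q) :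
    F (m - p + 1) ⊓ W m ≤ deligneR F W q (p + q) := by
  rcases eq_or_lt_of_le (show m ≤ p + q - 1 by omega) with rfl | hlt
  · exact le_sup_of_le_left (inf_le_inf (h.antitone (by omega)) (h.monotone (by omega)))
  · refine le_sup_of_le_right (le_iSup₂_of_le (p + q - 1 - m) (by omega) ?_)
    exact inf_le_inf (h.antitone (by omega)) (h.monotone (by omega))

theorem deligneR_le_F_inf_W_sup (h : IsMHS σ F W) (hm : m < p + q) :
    deligneR F W q (p + q) ≤ F (m - p + 1) ⊓ W (p + q) ⊔ W (m - 1) := by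
  refine sup_le (le_sup_of_le_left (inf_le_inf_right _ (h.antitone (by omega))))
    (iSup₂_le fun j _ => ?_)
  by_cases hj : j < p + q - m
  · exact le_sup_of_le_left (inf_le_inf (h.antitone (by omega)) (h.monotone (by omega)))
  · exact le_sup_of_le_right (inf_le_right.trans (h.monotone (by omega)))

theorem W_le_F_inf_W_sup_conj_deligneR (h : IsMHS σ F W) (hm : m < p + q) :
    W m ≤ F p ⊓ W m ⊔ hσ.conj (deligneR F W q (p + q)) := by
  obtain ⟨a, ha⟩ := h.1.2.1
  induction m using Int.induction_of_le_of_succ a with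
  | hle m hle => exact (h.monotone hle).trans (ha.le.trans bot_le)
  | hsucc m ih =>
    have ih' : W m ≤ F p ⊓ W (m + 1) ⊔ hσ.conj (deligneR F W q (p + q)) :=
      (ih (by omega)).trans (sup_le_sup_right (inf_le_inf_left _ (h.monotone (by omega))) _)
    refine (h.W_le_grF_sup_grFbar hσ (m + 1) p).trans
      (sup_le (sup_le le_sup_left ?_) (sup_le ?_ ?_))
    · simpa using ih'
    · exact le_sup_of_le_right (conj_mono (h.F_inf_W_le_deligneR hm))
    · simpa using ih'

theorem grF_inf_grFbar_le_deligneI_sup (h : IsMHS σ F W) (hk : p + q = k) :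
    grF F W k p ⊓ grFbar hσ F W k q ≤ deligneI hσ F W p q ⊔ W (k - 1) := by
  subst hk
  rintro v ⟨hv₁, hv₂⟩
  obtain ⟨f, hf, w₁, hw₁, rfl⟩ := Submodule.mem_sup.1 hv₁
  obtain ⟨u, hu, w₂, hw₂, huw⟩ := Submodule.mem_sup.1 hv₂
  obtain ⟨a, ha, c, hc, hac⟩ := Submodule.mem_sup.1
    (h.W_le_F_inf_W_sup_conj_deligneR hσ (by omega : p + q - 1 < p + q) (sub_mem hw₂ hw₁))
  have hfa : f - a ∈ hσ.conj (deligneR F W q (p + q)) := by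
    have : f - a = u + c := by rw [eq_sub_of_add_eq huw.symm, add_sub_assoc, ← hac]; abel
    rw [this]
    exact add_mem (conj_mono le_sup_left hu) hc
  have hv : f + w₁ = (f - a) + (a + w₁) := by abel
  rw [hv]
  refine Submodule.add_mem_sup ⟨⟨sub_mem hf.1 ha.1, sub_mem hf.2 ?_⟩, hfa⟩ (add_mem ha.2 hw₁)
  exact h.monotone (by omega) ha.2

theorem deligneI_inf_W_le (h : IsMHS σ F W) (hm : m < p + q) :
    deligneI hσ F W p q ⊓ W m ≤ W (m - 1) := by
  refine le_trans (le_inf ?_ ?_) (h.grF_inf_grFbar_le hσ m p)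
  · exact le_sup_of_le_left (inf_le_inf_right _ (deligneI_le_F hσ))
  · have hR := conj_mono (hσ := hσ) (h.deligneR_le_F_inf_W_sup hm)
    rw [conj_sup, h.conj_W] at hR
    calc deligneI hσ F W p q ⊓ W m
        ≤ (W (m - 1) ⊔ hσ.conj (F (m - p + 1) ⊓ W (p + q))) ⊓ W m :=
          inf_le_inf_right _ (inf_le_right.trans (hR.trans_eq (sup_comm _ _)))
      _ ≤ W (m - 1) ⊔ hσ.conj (F (m - p + 1) ⊓ W m) := by
          rw [sup_inf_assoc_of_le _ (h.monotone (by omega)), h.conj_inf_W]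
          exact sup_le_sup_left (conj_mono (inf_le_inf_right _ inf_le_left)) _
      _ = grFbar hσ F W m (m - p + 1) := sup_comm _ _

theorem disjoint_deligneI_W (h : IsMHS σ F W) :
    Disjoint (deligneI hσ F W p q) (W (p + q - 1)) := by
  obtain ⟨a, ha⟩ := h.1.2.1
  suffices ∀ m, deligneI hσ F W p q ⊓ W (p + q - 1) ≤ W m from
    disjoint_iff_inf_le.2 ((this a).trans ha.le)
  intro m
  induction m using Int.induction_of_ge_of_pred (p + q - 1) with
  | hge m hm => exact inf_le_right.trans (h.monotone hm)
  | hpred m ih =>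
    by_cases hm : m + 1 < p + q
    · simpa using (le_inf inf_le_left ih).trans (h.deligneI_inf_W_le hσ hm)
    · exact inf_le_right.trans (h.monotone (by omega))

theorem grF_inf_grFbar_eq (h : IsMHS σ F W) (hk : p + q = k) :
    grF F W k p ⊓ grFbar hσ F W k q = deligneI hσ F W p q ⊔ W (k - 1) :=
  le_antisymm (h.grF_inf_grFbar_le_deligneI_sup hσ hk)
    (sup_le (hk ▸ h.deligneI_le_grF_inf_grFbar hσ) (le_inf le_sup_right le_sup_right))

theorem grF_eq_deligneI_sup (h : IsMHS σ F W) :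
    grF F W k p = deligneI hσ F W p (k - p) ⊔ grF F W k (p + 1) := by
  have hW : W (k - 1) ≤ grF F W k (p + 1) := le_sup_right
  rw [h.grF_eq_grF_succ_sup hσ, h.grF_inf_grFbar_eq hσ (by ring), sup_comm, sup_assoc,
    sup_eq_right.2 hW]

theorem disjoint_deligneI_grF_succ (h : IsMHS σ F W) :
    Disjoint (deligneI hσ F W p q) (grF F W (p + q) (p + 1)) := by
  have hD := h.grF_inf_grFbar_le hσ (p + q) (p + 1)
  rw [show p + q - (p + 1) + 1 = q by ring] at hD
  refine disjoint_iff_inf_le.2 (le_trans ?_ (h.disjoint_deligneI_W hσ (p := p) (q := q)).eq_bot.le)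
  exact le_inf inf_le_left (le_trans (le_inf inf_le_right
    (inf_le_left.trans ((h.deligneI_le_grF_inf_grFbar hσ).trans inf_le_right))) hD)

theorem grF_eq_deligneSpan_sup (h : IsMHS σ F W) :
    grF F W k p = deligneSpan hσ F W {i | p ≤ i.1 ∧ i.1 + i.2 = k} ⊔ W (k - 1) := by
  obtain ⟨b, hb⟩ := h.2.2.1.2.2
  induction p using Int.induction_of_ge_of_pred b with
  | hge p hp =>
    have hFp : F p = ⊥ := eq_bot_iff.2 (hb ▸ h.antitone hp)
    have hspan : deligneSpan hσ F W {i | p ≤ i.1 ∧ i.1 + i.2 = k} ≤ W (k - 1) :=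
      iSup₂_le fun i hi => (deligneI_le_F hσ).trans ((h.antitone hi.1).trans (hFp.le.trans bot_le))
    rw [grF, hFp, bot_inf_eq, bot_sup_eq, sup_eq_right.2 hspan]
  | hpred p ih =>
    have hS : {i : ℤ × ℤ | p ≤ i.1 ∧ i.1 + i.2 = k} =
        insert (p, k - p) {i | p + 1 ≤ i.1 ∧ i.1 + i.2 = k} := by
      ext ⟨r, s⟩
      simp only [Set.mem_ofPred_eq, Set.mem_insert_iff, Prod.mk.injEq]
      omega
    rw [h.grF_eq_deligneI_sup hσ, ih, hS, deligneSpan_insert, sup_assoc]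

theorem deligneSpan_le_F_inf_W (h : IsMHS σ F W) :
    deligneSpan hσ F W {i | p ≤ i.1 ∧ i.1 + i.2 ≤ k} ≤ F p ⊓ W k :=
  iSup₂_le fun _ hi => le_inf ((deligneI_le_F hσ).trans (h.antitone hi.1)) (h.deligneI_le_W hσ hi.2)

theorem F_inf_W_eq_deligneSpan (h : IsMHS σ F W) :
    F p ⊓ W k = deligneSpan hσ F W {i | p ≤ i.1 ∧ i.1 + i.2 ≤ k} := by
  refine le_antisymm ?_ (h.deligneSpan_le_F_inf_W hσ)
  obtain ⟨a, ha⟩ := h.1.2.1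
  induction k using Int.induction_of_le_of_succ a with
  | hle k hk => exact inf_le_right.trans ((h.monotone hk).trans (ha.le.trans bot_le))
  | hsucc k ih =>
    set X := deligneSpan hσ F W {i | p ≤ i.1 ∧ i.1 + i.2 = k + 1}
    have hX : X ≤ F p ⊓ W (k + 1) := iSup₂_le fun _ hi =>
      le_inf ((deligneI_le_F hσ).trans (h.antitone hi.1)) (h.deligneI_le_W hσ hi.2.le)
    have hgr : F p ⊓ W (k + 1) ≤ X ⊔ W k := by
      have hgrF := h.grF_eq_deligneSpan_sup hσ (k := k + 1) (p := p)
      rw [add_sub_cancel_right] at hgrF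
      exact (le_sup_left : F p ⊓ W (k + 1) ≤ grF F W (k + 1) p).trans hgrF.le
    calc F p ⊓ W (k + 1) = (X ⊔ W k) ⊓ (F p ⊓ W (k + 1)) := (inf_eq_right.2 hgr).symm
      _ = X ⊔ W k ⊓ (F p ⊓ W (k + 1)) := sup_inf_assoc_of_le _ hX
      _ ≤ _ := by
        refine sup_le (deligneSpan_mono hσ fun i hi => ⟨hi.1, hi.2.le⟩) ?_
        refine (le_inf (inf_le_right.trans inf_le_left) inf_le_left).trans (ih.trans ?_)
        exact deligneSpan_mono hσ fun i hi => ⟨hi.1, by linarith [hi.2]⟩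

theorem W_eq_deligneSpan (h : IsMHS σ F W) (k : ℤ) :
    W k = deligneSpan hσ F W {i | i.1 + i.2 ≤ k} := by
  obtain ⟨a, ha⟩ := h.2.2.1.2.1
  refine le_antisymm ?_ (iSup₂_le fun _ hi => h.deligneI_le_W hσ hi)
  calc W k = F a ⊓ W k := by rw [ha, top_inf_eq]
    _ = _ := h.F_inf_W_eq_deligneSpan hσ
    _ ≤ _ := deligneSpan_mono hσ fun _ hi => hi.2

theorem F_eq_deligneSpan (h : IsMHS σ F W) (p : ℤ) :
    F p = deligneSpan hσ F W {i | p ≤ i.1} := by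
  obtain ⟨b, hb⟩ := h.1.2.2
  refine le_antisymm ?_ (iSup₂_le fun _ hi => (deligneI_le_F hσ).trans (h.antitone hi))
  calc F p = F p ⊓ W b := by rw [hb, inf_top_eq]
    _ = _ := h.F_inf_W_eq_deligneSpan hσ
    _ ≤ _ := deligneSpan_mono hσ fun _ hi => hi.1

/-- Order `I^{p,q}` by weight `p + q` first and then by decreasing `p`: the earlier pieces
lie in `F^{p+1} ∩ W_{p+q} + W_{p+q-1}`, which meets `I^{p,q}` trivially. -/
theorem iSupIndep_deligneI (h : IsMHS σ F W) :
    iSupIndep fun i : ℤ × ℤ => deligneI hσ F W i.1 i.2 := by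
  refine iSupIndep_of_disjoint_biSup_lt (key := fun i => toLex (i.1 + i.2, -i.1)) ?_ ?_
  · rintro ⟨p, q⟩ ⟨r, s⟩ hpr
    simp only [toLex_inj, Prod.mk.injEq] at hpr
    ext <;> simp only <;> omega
  · rintro ⟨p, q⟩
    refine (h.disjoint_deligneI_grF_succ hσ).mono_right (iSup₂_le ?_)
    rintro ⟨r, s⟩ hlt
    rcases Prod.Lex.toLex_lt_toLex.1 hlt with hw | ⟨hw, hr⟩
    · exact le_sup_of_le_right (h.deligneI_le_W hσ (by simp only at hw; omega))
    · refine le_sup_of_le_left (le_inf ((deligneI_le_F hσ).trans (h.antitone ?_))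
        (h.deligneI_le_W hσ hw.le))
      simp only at hr
      omega

theorem isInternal_deligneI (h : IsMHS σ F W) :
    DirectSum.IsInternal fun i : ℤ × ℤ => deligneI hσ F W i.1 i.2 := by
  refine (DirectSum.isInternal_submodule_iff_iSupIndep_and_iSup_eq_top _).2
    ⟨h.iSupIndep_deligneI hσ, eq_top_iff.2 ?_⟩
  obtain ⟨b, hb⟩ := h.1.2.2
  rw [← hb, h.W_eq_deligneSpan hσ]
  exact iSup₂_le fun i _ => le_iSup (fun i : ℤ × ℤ => deligneI hσ F W i.1 i.2) i

theorem deligneSpan_inf_deligneSpan (h : IsMHS σ F W) (S T : Set (ℤ × ℤ)) :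
    deligneSpan hσ F W S ⊓ deligneSpan hσ F W T = deligneSpan hσ F W (S ∩ T) :=
  (h.iSupIndep_deligneI hσ).biSup_inf_biSup S T

theorem conj_grF (h : IsMHS σ F W) : hσ.conj (grF F W k p) = grFbar hσ F W k p := by
  rw [grF, grFbar, conj_sup, h.conj_W]

theorem conj_grFbar (h : IsMHS σ F W) : hσ.conj (grFbar hσ F W k p) = grF F W k p := by
  rw [grF, grFbar, conj_sup, conj_conj, h.conj_W]

theorem conj_deligneI_le_deligneI_sup (h : IsMHS σ F W) :
    hσ.conj (deligneI hσ F W p q) ≤ deligneI hσ F W q p ⊔ W (p + q - 1) := by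
  refine (conj_mono (h.deligneI_le_grF_inf_grFbar hσ)).trans ?_
  rw [conj_inf, h.conj_grF, h.conj_grFbar, inf_comm, h.grF_inf_grFbar_eq hσ (add_comm q p)]

theorem deligneR_le_deligneSpan (h : IsMHS σ F W) :
    deligneR F W q (p + q) ≤
      deligneSpan hσ F W (insert (q, p) {i | i.2 < p ∧ i.1 + i.2 ≤ p + q}) := by
  refine sup_le ?_ (iSup₂_le fun j hj => ?_) <;> rw [h.F_inf_W_eq_deligneSpan hσ] <;>
    refine deligneSpan_mono hσ ?_ <;> rintro ⟨r, s⟩ ⟨hr, hrs⟩ <;>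
    simp only [Set.mem_insert_iff, Prod.mk.injEq, Set.mem_ofPred_eq] at hr hrs ⊢ <;> omega

theorem conj_deligneI_le_deligneSpan (h : IsMHS σ F W) :
    hσ.conj (deligneI hσ F W p q) ≤
      deligneSpan hσ F W (insert (q, p) {i | i.2 < p ∧ i.1 + i.2 < p + q}) := by
  have hW : hσ.conj (deligneI hσ F W p q) ≤
      deligneSpan hσ F W (insert (q, p) {i | i.1 + i.2 ≤ p + q - 1}) := by
    rw [deligneSpan_insert, ← h.W_eq_deligneSpan hσ]
    exact h.conj_deligneI_le_deligneI_sup hσ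
  have hR : hσ.conj (deligneI hσ F W p q) ≤ deligneR F W q (p + q) := conj_le_iff.2 inf_le_right
  refine (le_inf hW (hR.trans (h.deligneR_le_deligneSpan hσ))).trans ?_
  rw [h.deligneSpan_inf_deligneSpan hσ]
  refine deligneSpan_mono hσ ?_
  rintro ⟨r, s⟩ ⟨h₁, h₂⟩
  simp only [Set.mem_insert_iff, Prod.mk.injEq, Set.mem_ofPred_eq] at h₁ h₂ ⊢
  omega

/-- The inductive step for condition (c): write `σ x = d + w` with `d ∈ I^{q,p}` and `w` of
lower weight, and use the induction hypothesis once on `w` and once on `σ w = x - σ d`. -/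
theorem conj_deligneI_le_of_forall_lt (h : IsMHS σ F W)
    (ih : ∀ r s, r + s < p + q → hσ.conj (deligneI hσ F W r s) ≤
      deligneSpan hσ F W (insert (s, r) {i | i.1 < s ∧ i.2 < r})) :
    hσ.conj (deligneI hσ F W p q) ≤ deligneSpan hσ F W (insert (q, p) {i | i.1 < q ∧ i.2 < p}) := by
  have hconj : ∀ S T : Set (ℤ × ℤ), (∀ i ∈ S, i.1 + i.2 < p + q ∧
      insert (i.2, i.1) {j | j.1 < i.2 ∧ j.2 < i.1} ⊆ T) →
      hσ.conj (deligneSpan hσ F W S) ≤ deligneSpan hσ F W T := fun S T hST =>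
    conj_deligneSpan_le hσ fun i hi =>
      (ih i.1 i.2 (hST i hi).1).trans (deligneSpan_mono hσ (hST i hi).2)
  refine conj_le_iff.2 fun x hx => mem_conj.2 ?_
  have hσx := h.conj_deligneI_le_deligneSpan hσ (mem_conj.2 (by rwa [hσ.1] : σ (σ x) ∈ _))
  rw [deligneSpan_insert] at hσx ⊢
  obtain ⟨d, hd, w, hw, hdw⟩ := Submodule.mem_sup.1 hσx
  have hσw₁ : σ w ∈ deligneSpan hσ F W {i | i.1 < p ∧ i.1 + i.2 < p + q} := by
    refine hconj _ _ ?_ (mem_conj.2 (by rwa [hσ.1]))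
    rintro ⟨r, s⟩ ⟨hs, hrs⟩
    refine ⟨hrs, ?_⟩
    rintro ⟨a, b⟩ hab
    simp only [Set.mem_insert_iff, Prod.mk.injEq, Set.mem_ofPred_eq] at hab ⊢
    omega
  have hσw₂ : σ w ∈ deligneSpan hσ F W (insert (p, q) {i | i.2 < q ∧ i.1 + i.2 < p + q}) := by
    have hσd := h.conj_deligneI_le_deligneSpan hσ (mem_conj.2 (by rwa [hσ.1] : σ (σ d) ∈ _))
    rw [add_comm q p] at hσd
    have hσw : σ w = x - σ d := by rw [← hσ.1 x, ← hdw, map_add, add_sub_cancel_left]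
    rw [hσw]
    exact sub_mem (deligneI_le_deligneSpan hσ (Set.mem_insert _ _) hx) hσd
  have hw' : w ∈ deligneSpan hσ F W {i | i.1 < q ∧ i.2 < p} := by
    have hσw := (h.deligneSpan_inf_deligneSpan hσ _ _).le ⟨hσw₁, hσw₂⟩
    refine hconj _ _ ?_ (mem_conj.2 hσw)
    rintro ⟨r, s⟩ ⟨⟨hr, hrs⟩, hrs'⟩
    simp only [Set.mem_insert_iff, Prod.mk.injEq, Set.mem_ofPred_eq] at hrs'
    refine ⟨hrs, ?_⟩
    rintro ⟨a, b⟩ hab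
    simp only [Set.mem_insert_iff, Prod.mk.injEq, Set.mem_ofPred_eq] at hab ⊢
    omega
  rw [← hdw]
  exact Submodule.add_mem_sup hd hw'

theorem conj_deligneI_le (h : IsMHS σ F W) (p q : ℤ) :
    hσ.conj (deligneI hσ F W p q) ≤ deligneSpan hσ F W (insert (q, p) {i | i.1 < q ∧ i.2 < p}) := by
  obtain ⟨a, ha⟩ := h.1.2.1
  suffices ∀ k p q, p + q ≤ k → hσ.conj (deligneI hσ F W p q) ≤
      deligneSpan hσ F W (insert (q, p) {i | i.1 < q ∧ i.2 < p}) from this _ p q le_rfl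
  intro k
  induction k using Int.induction_of_le_of_succ a with
  | hle k hk =>
    exact fun p q hpq =>
      conj_le_iff.2 ((h.deligneI_le_W hσ (hpq.trans hk)).trans (ha.le.trans bot_le))
  | hsucc k ih =>
    exact fun p q hpq => h.conj_deligneI_le_of_forall_lt hσ fun r s hrs => ih r s (by omega)

theorem le_deligneI_of_isDeligneBigrading (h : IsMHS σ F W) {J : ℤ → ℤ → Submodule ℂ V}
    (hJ : IsDeligneBigrading σ F W J) (p q : ℤ) : J p q ≤ deligneI hσ F W p q := by
  have hJF : ∀ r s, J r s ≤ F r := fun r s => by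
    rw [hJ.2.1 r]
    exact le_iSup₂_of_le r le_rfl (le_iSup (J r) s)
  have hJW : ∀ r s k, r + s ≤ k → J r s ≤ W k := fun r s k hk => by
    rw [hJ.2.2.1 k]
    exact le_iSup₂_of_le r s (le_iSup_of_le hk le_rfl)
  have hR : J q p ⊔ (⨆ (r : ℤ) (_ : r < q) (s : ℤ) (_ : s < p), J r s) ≤
      deligneR F W q (p + q) := by
    refine sup_le (le_sup_of_le_left (le_inf (hJF q p) (hJW q p _ (by omega))))
      (iSup₂_le fun r hr => iSup₂_le fun s hs => le_sup_of_le_right ?_)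
    exact le_iSup₂_of_le (q - r) (by omega)
      (le_inf ((hJF r s).trans (h.antitone (by omega))) (hJW r s _ (by omega)))
  exact le_inf (le_inf (hJF p q) (hJW p q _ le_rfl)) fun v hv =>
    mem_conj.2 (hR (hJ.2.2.2 p q v hv))

theorem eq_deligneI_of_isDeligneBigrading (h : IsMHS σ F W) {J : ℤ → ℤ → Submodule ℂ V}
    (hJ : IsDeligneBigrading σ F W J) : J = deligneI hσ F W := by
  have huncurried := ((h.iSupIndep_deligneI hσ).le_iff_eq_of_iSup_eq_top
    hJ.1.submodule_iSup_eq_top).1 fun i => h.le_deligneI_of_isDeligneBigrading hσ hJ i.1 i.2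
  funext p q
  exact congrFun huncurried (p, q)

end IsMHS

end Deligne

theorem zero_loci_stmt8_general {V : Type*} [AddCommGroup V] [Module ℂ V]
    (σ : V →ₗ[ℝ] V) (hσ : IsConjugation σ)
    (F W : ℤ → Submodule ℂ V) (hFW : IsMHS σ F W) :
    ∃! I : ℤ → ℤ → Submodule ℂ V, IsDeligneBigrading σ F W I := by
  refine ⟨deligneI hσ F W, ⟨hFW.isInternal_deligneI hσ, fun p => ?_, fun k => ?_,
    fun p q v hv => ?_⟩, fun J hJ => hFW.eq_deligneI_of_isDeligneBigrading hσ hJ⟩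
  · rw [hFW.F_eq_deligneSpan hσ]
    exact le_antisymm
      (iSup₂_le fun i hi => le_iSup₂_of_le i.1 hi (le_iSup (deligneI hσ F W i.1) i.2))
      (iSup₂_le fun r hr => iSup_le fun s => deligneI_le_deligneSpan hσ hr)
  · rw [hFW.W_eq_deligneSpan hσ]
    simp only [deligneSpan, iSup_prod, Set.mem_ofPred_eq]
  · have hσv := hFW.conj_deligneI_le hσ p q (IsConjugation.mem_conj.2 (by rwa [hσ.1] : σ (σ v) ∈ _))
    rw [deligneSpan_insert] at hσv
    refine (sup_le_sup_left (iSup₂_le fun i hi => ?_) _ :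
      _ ≤ deligneI hσ F W q p ⊔ ⨆ (r : ℤ) (_ : r < q) (s : ℤ) (_ : s < p), deligneI hσ F W r s) hσv
    exact le_iSup₂_of_le i.1 hi.1 (le_iSup₂_of_le i.2 hi.2 le_rfl)

/-- Deligne: a mixed Hodge structure `(F, W)` admits a unique bigrading
`V = ⊕_{p,q} I^{p,q}` satisfying (a), (b), (c). -/
theorem zero_loci_stmt8 {V : Type*} [AddCommGroup V] [Module ℂ V] [FiniteDimensional ℂ V]
    (σ : V →ₗ[ℝ] V) (hσ : IsConjugation σ)
    (F W : ℤ → Submodule ℂ V) (hFW : IsMHS σ F W) :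
    ∃! I : ℤ → ℤ → Submodule ℂ V, IsDeligneBigrading σ F W I :=
  zero_loci_stmt8_general σ hσ F W hFW
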